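/- For any wheel graph W_n with n ≥ 4, the outer-independent total Roman domination number equals ⌈(n−1)/2⌉ + 2, i.e., γ_oitR(W_n) = ⌈(n−1)/2⌉ + 2. -/

import Mathlib

namespace OITRPaper

variable {V : Type*}

/-- `S` is a vertex cover of `G`: every edge of `G` is incident to a vertex of `S`. -/
def IsVertexCover (G : SimpleGraph V) (S : Set V) : Prop :=
  ∀ ⦃u v : V⦄, G.Adj u v → u ∈ S ∨ v ∈ S

/-- `S` is an independent set of `G`: no two vertices of `S` are adjacent. -/
def IsIndepSet (G : SimpleGraph V) (S : Set V) : Prop :=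
  ∀ ⦃u : V⦄, u ∈ S → ∀ ⦃v : V⦄, v ∈ S → ¬ G.Adj u v

/-- `S` is a dominating set of `G`. -/
def IsDomSet (G : SimpleGraph V) (S : Set V) : Prop :=
  ∀ v : V, v ∉ S → ∃ u ∈ S, G.Adj v u

/-- `S` is a total dominating set of `G`: every vertex has a neighbor in `S`. -/
def IsTotalDomSet (G : SimpleGraph V) (S : Set V) : Prop :=
  ∀ v : V, ∃ u ∈ S, G.Adj v u

/-- `G` is claw-free: it contains no induced `K_{1,3}`. -/
def ClawFree (G : SimpleGraph V) : Prop :=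
  ∀ c a b d : V, G.Adj c a → G.Adj c b → G.Adj c d →
    a ≠ b → a ≠ d → b ≠ d → G.Adj a b ∨ G.Adj a d ∨ G.Adj b d

/-- `f` is a Roman dominating function on `G`. -/
def IsRDF (G : SimpleGraph V) (f : V → ℕ) : Prop :=
  (∀ v, f v ≤ 2) ∧ ∀ v, f v = 0 → ∃ u, G.Adj v u ∧ f u = 2

/-- `f` is an outer-independent Roman dominating function on `G`. -/
def IsOIRDF (G : SimpleGraph V) (f : V → ℕ) : Prop :=
  IsRDF G f ∧ IsIndepSet G {v | f v = 0}

/-- `f` is an outer-independent total Roman dominating function on `G`. -/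
def IsOITRDF (G : SimpleGraph V) (f : V → ℕ) : Prop :=
  IsOIRDF G f ∧ ∀ v, 1 ≤ f v → ∃ u, G.Adj v u ∧ 1 ≤ f u

variable [Fintype V]

/-- The vertex cover number `α(G)`. -/
noncomputable def vertexCoverNum (G : SimpleGraph V) : ℕ :=
  sInf {m | ∃ S : Set V, IsVertexCover G S ∧ S.ncard = m}

/-- The independence number `β(G)`. -/
noncomputable def indepNum (G : SimpleGraph V) : ℕ :=
  sSup {m | ∃ S : Set V, IsIndepSet G S ∧ S.ncard = m}

/-- The domination number `γ(G)`. -/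
noncomputable def domNum (G : SimpleGraph V) : ℕ :=
  sInf {m | ∃ S : Set V, IsDomSet G S ∧ S.ncard = m}

/-- The total domination number `γ_t(G)`. -/
noncomputable def totalDomNum (G : SimpleGraph V) : ℕ :=
  sInf {m | ∃ S : Set V, IsTotalDomSet G S ∧ S.ncard = m}

/-- The outer-independent total domination number `γ_{t,oi}(G)`. -/
noncomputable def oiTotalDomNum (G : SimpleGraph V) : ℕ :=
  sInf {m | ∃ S : Set V, IsTotalDomSet G S ∧ IsIndepSet G Sᶜ ∧ S.ncard = m}

/-- The Roman domination number `γ_R(G)`. -/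
noncomputable def romanDomNum (G : SimpleGraph V) : ℕ :=
  sInf {w | ∃ f : V → ℕ, IsRDF G f ∧ ∑ v, f v = w}

/-- The outer-independent Roman domination number `γ_{oiR}(G)`. -/
noncomputable def oiRomanDomNum (G : SimpleGraph V) : ℕ :=
  sInf {w | ∃ f : V → ℕ, IsOIRDF G f ∧ ∑ v, f v = w}

/-- The outer-independent total Roman domination number `γ_{oitR}(G)`. -/
noncomputable def oitRomanDomNum (G : SimpleGraph V) : ℕ :=
  sInf {w | ∃ f : V → ℕ, IsOITRDF G f ∧ ∑ v, f v = w}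


/-- The circulant graph `C(n,k)` on vertex set `ℤ/nℤ` (modelled as `Fin n`):
distinct vertices `i, j` are adjacent iff `j ≡ i + t (mod n)` or `i ≡ j + t (mod n)`
for some `t ∈ {1, …, k}`. -/
def circulant (n k : ℕ) : SimpleGraph (Fin n) where
  Adj i j := i ≠ j ∧ ∃ t : ℕ, 1 ≤ t ∧ t ≤ k ∧
      ((i.val + t) % n = j.val ∨ (j.val + t) % n = i.val)
  symm := by
    constructor
    rintro i j ⟨hij, t, h1, h2, h⟩
    exact ⟨hij.symm, t, h1, h2, h.symm⟩
  loopless := ⟨fun i h => h.1 rfl⟩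

/-- The wheel graph `W_n` of order `n`: a universal hub vertex (`none`) joined to all
vertices of a cycle of order `n - 1`. -/
def wheel (n : ℕ) : SimpleGraph (Option (Fin (n - 1))) where
  Adj x y :=
    match x, y with
    | none, none => False
    | none, some _ => True
    | some _, none => True
    | some i, some j => i ≠ j ∧
        ((i.val + 1) % (n - 1) = j.val ∨ (j.val + 1) % (n - 1) = i.val)
  symm := by
    constructor
    rintro (_ | i) (_ | j) h <;> simp_all
    exact ⟨Ne.symm h.1, h.2.symm⟩
  loopless := by
    constructor
    rintro (_ | i) h <;> simp_all

/-- The direct (tensor) product of two simple graphs. -/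
def directProd {α β : Type*} (G : SimpleGraph α) (H : SimpleGraph β) :
    SimpleGraph (α × β) where
  Adj x y := G.Adj x.1 y.1 ∧ H.Adj x.2 y.2
  symm := ⟨fun _ _ ⟨h1, h2⟩ => ⟨h1.symm, h2.symm⟩⟩
  loopless := ⟨fun x h => G.irrefl h.1⟩

/-!
Weight 2 on the hub and 1, 0, 1, 0, … around the rim gives an outer-independent total Roman
dominating function of weight `⌈(n-1)/2⌉ + 2`. Conversely, the rim zeros of any
outer-independent Roman dominating function are independent, so rotating the rim by one step
maps them injectively to positive rim vertices: at least `⌈(n-1)/2⌉` rim vertices are positive.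
A hub of weight 0 forces every rim vertex to be positive and one of them to carry a 2; a hub of
weight 1 forces either a 2 on the rim or no zero at all.
-/

open Finset

section Counting

variable {α : Type*}

lemma card_le_two_mul_card_filter_not [Fintype α] [DecidableEq α] (p : α → Prop)
    [DecidablePred p] {σ : α → α} (hσ : σ.Injective) (h : ∀ x, p x → ¬ p (σ x)) :
    Fintype.card α ≤ 2 * #{x | ¬ p x} := by
  have hinj : #{x | p x} ≤ #{x | ¬ p x} :=
    card_le_card_of_injOn σ (fun x hx => by simp_all) hσ.injOn
  have hsplit : #{x | p x} + #{x | ¬ p x} = Fintype.card α := by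
    rw [card_filter_add_card_filter_not, card_univ]
  omega

lemma card_filter_ne_zero_add_card_filter_two_le_sum (s : Finset α) (f : α → ℕ) :
    #{x ∈ s | f x ≠ 0} + #{x ∈ s | 2 ≤ f x} ≤ ∑ x ∈ s, f x := by
  rw [card_filter, card_filter, ← sum_add_distrib]
  exact sum_le_sum fun x _ => by split_ifs <;> omega

end Counting

lemma sum_fin_ite_even (m : ℕ) :
    ∑ i : Fin m, (if Even i.val then 1 else 0) = (m + 1) / 2 := by
  induction m with
  | zero => simp
  | succ k ih =>
    rw [Fin.sum_univ_castSucc]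
    simp only [Fin.val_castSucc, Fin.val_last, ih]
    rcases Nat.even_or_odd k with ⟨r, rfl⟩ | ⟨r, rfl⟩ <;> simp [parity_simps] <;> omega

lemma even_succ_mod_of_odd {a m : ℕ} (ha : Odd a) (hm : a < m) : Even ((a + 1) % m) := by
  rcases (by omega : a + 1 < m ∨ a + 1 = m) with h | h
  · rw [Nat.mod_eq_of_lt h]; exact ha.add_one
  · rw [h, Nat.mod_self]; exact ⟨0, rfl⟩

namespace IsRDF

variable {V : Type*} {G : SimpleGraph V} {f : V → ℕ}

lemma ne_zero_of_forall_ne_two (hf : IsRDF G f) (h : ∀ v, f v ≠ 2) (v : V) : f v ≠ 0 :=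
  fun hv => (hf.2 v hv).elim fun u hu => h u hu.2

end IsRDF

variable {n : ℕ}

lemma wheel_adj_some_finRotate (hn : 3 ≤ n) (i : Fin (n - 1)) :
    (wheel n).Adj (some i) (some (finRotate (n - 1) i)) := by
  refine ⟨fun h => ?_, Or.inl ?_⟩
  · have : i ∈ (finRotate (n - 1)).support := by
      rw [support_finRotate_of_le (by omega)]; exact mem_univ i
    exact Equiv.Perm.mem_support.1 this h.symm
  · have := i.neZero
    rw [finRotate_apply, Fin.val_add, Fin.val_one', Nat.mod_eq_of_lt (a := 1) (by omega)]

lemma IsOIRDF.wheel_le_sum (hn : 4 ≤ n) {f : Option (Fin (n - 1)) → ℕ}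
    (hf : IsOIRDF (wheel n) f) : (n - 1 + 1) / 2 + 2 ≤ ∑ v, f v := by
  obtain ⟨hrdf, hind⟩ := hf
  set k := #{i | f (some i) ≠ 0}
  set t := #{i | 2 ≤ f (some i)}
  have hsum : ∑ v, f v = f none + ∑ i, f (some i) := Fintype.sum_option f
  have hcount : k + t ≤ ∑ i, f (some i) :=
    card_filter_ne_zero_add_card_filter_two_le_sum _ _
  have hhalf : n - 1 ≤ 2 * k := by
    simpa using card_le_two_mul_card_filter_not (fun i => f (some i) = 0)
      (finRotate (n - 1)).injective fun i hi hi' =>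
        hind hi hi' (wheel_adj_some_finRotate (by omega) i)
  have hall : (∀ i, f (some i) ≠ 0) → k = n - 1 := fun h => by simp [k, h]
  have hhub := hrdf.1 none
  rcases (by omega : f none = 0 ∨ f none = 1 ∨ f none = 2) with h0 | h1 | h2
  · have hk := hall fun i hi => hind h0 hi trivial
    obtain ⟨_ | i, hadj, hi⟩ := hrdf.2 none h0
    · exact hadj.elim
    have ht : 0 < t := card_pos.2 ⟨i, by simp [hi]⟩
    omega
  · by_cases ht : t = 0
    · have hno2 : ∀ v, f v ≠ 2 := by
        rintro (_ | i) hi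
        · omega
        · exact filter_eq_empty_iff.1 (card_eq_zero.1 ht) (mem_univ i) hi.ge
      have hk := hall fun i => hrdf.ne_zero_of_forall_ne_two hno2 (some i)
      omega
    · omega
  · omega

def wheelOITRDF (n : ℕ) : Option (Fin (n - 1)) → ℕ
  | none => 2
  | some i => if Even i.val then 1 else 0

lemma isOITRDF_wheelOITRDF (hn : 2 ≤ n) : IsOITRDF (wheel n) (wheelOITRDF n) := by
  refine ⟨⟨⟨?_, ?_⟩, ?_⟩, ?_⟩
  · rintro (_ | i) <;> simp only [wheelOITRDF, le_refl]
    split_ifs <;> omega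
  · rintro (_ | i) hi
    · simp [wheelOITRDF] at hi
    · exact ⟨none, trivial, rfl⟩
  · rintro (_ | i) hi (_ | j) hj ⟨-, hij | hji⟩ <;>
      simp only [wheelOITRDF, Set.mem_ofPred_eq, ite_eq_right_iff, one_ne_zero,
        imp_false, Nat.not_even_iff_odd, reduceCtorEq] at hi hj
    · exact Nat.not_even_iff_odd.2 hj (hij ▸ even_succ_mod_of_odd hi i.isLt)
    · exact Nat.not_even_iff_odd.2 hi (hji ▸ even_succ_mod_of_odd hj j.isLt)
  · rintro (_ | i) -
    · exact ⟨some ⟨0, by omega⟩, trivial, by simp [wheelOITRDF]⟩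
    · exact ⟨none, trivial, by simp [wheelOITRDF]⟩

lemma sum_wheelOITRDF : ∑ v, wheelOITRDF n v = (n - 1 + 1) / 2 + 2 := by
  rw [Fintype.sum_option]
  simp only [wheelOITRDF, sum_fin_ite_even]
  omega

/-- `γ_oitR(W_n) = ⌈(n-1)/2⌉ + 2` for the wheel graph of order `n ≥ 4`. -/
theorem stmt16 (n : ℕ) (hn : 4 ≤ n) :
    oitRomanDomNum (wheel n) = (n - 1) ⌈/⌉ 2 + 2 := by
  rw [Nat.ceilDiv_eq_add_pred_div, oitRomanDomNum]
  refine IsLeast.csInf_eq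
    ⟨⟨wheelOITRDF n, isOITRDF_wheelOITRDF (by omega), sum_wheelOITRDF⟩, ?_⟩
  rintro w ⟨f, hf, rfl⟩
  exact hf.1.wheel_le_sum hn

end OITRPaper
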